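/- arXiv:1407.5358 — 5 statements merged into one kernel-verified Lean document; each statement's English description precedes it below -/
import Mathlib

section
/- If P and P̃ are two row-stochastic n×n matrices, then the matrix A = P − P̃ has rows summing to zero, and for any vector v ∈ ℝ^n, ‖(P − P̃)·v‖_∞ ≤ (1/2)·‖P − P̃‖_∞·(max_j v_j − min_j v_j). -/
/-- If `P` and `P̃` are row-stochastic n×n matrices, then `A = P − P̃` has rows
summing to zero, and for any `v ∈ ℝ^n`,
`‖(P − P̃)·v‖_∞ ≤ (1/2)·‖P − P̃‖_∞·(max_j v j − min_j v j)`, where the matrix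
norm is the max-row-sum norm and the vector norm the sup norm on `Fin n → ℝ`. -/
theorem stochastic_diff_mulVec_bound {n : ℕ} [NeZero n]
    (P Pt : Matrix (Fin n) (Fin n) ℝ)
    (hP : (∀ i j, 0 ≤ P i j) ∧ (∀ i, ∑ j, P i j = 1))
    (hPt : (∀ i j, 0 ≤ Pt i j) ∧ (∀ i, ∑ j, Pt i j = 1)) :
    (∀ i, ∑ j, (P - Pt) i j = 0) ∧
    ∀ v : Fin n → ℝ,
      ‖(P - Pt).mulVec v‖ ≤
        (1 / 2) * (Finset.univ.sup' Finset.univ_nonempty (fun i => ∑ j, |(P - Pt) i j|)) *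
          (Finset.univ.sup' Finset.univ_nonempty v -
            Finset.univ.inf' Finset.univ_nonempty v) := by
  have hrow : ∀ i, ∑ j, (P - Pt) i j = 0 := by
    intro i
    simp [Matrix.sub_apply, Finset.sum_sub_distrib, hP.2 i, hPt.2 i]
  refine ⟨hrow, fun v => ?_⟩
  set M := Finset.univ.sup' Finset.univ_nonempty v with hM
  set m := Finset.univ.inf' Finset.univ_nonempty v with hm
  set S := Finset.univ.sup' Finset.univ_nonempty (fun i => ∑ j, |(P - Pt) i j|) with hS
  obtain ⟨i0⟩ : Nonempty (Fin n) := inferInstance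
  have hMm : m ≤ M :=
    le_trans (Finset.inf'_le _ (Finset.mem_univ i0)) (Finset.le_sup' _ (Finset.mem_univ i0))
  have hS0 : 0 ≤ S :=
    le_trans (Finset.sum_nonneg fun j _ => abs_nonneg _)
      (Finset.le_sup' (fun i => ∑ j, |(P - Pt) i j|) (Finset.mem_univ i0))
  have hrhs : 0 ≤ (1 / 2) * S * (M - m) := by
    apply mul_nonneg (by linarith) (by linarith)
  rw [pi_norm_le_iff_of_nonneg hrhs]
  intro i
  have key : (P - Pt).mulVec v i = ∑ j, (P - Pt) i j * (v j - (M + m) / 2) := by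
    simp only [Matrix.mulVec, dotProduct, mul_sub, Finset.sum_sub_distrib,
      ← Finset.sum_mul, hrow i, zero_mul, sub_zero]
  rw [Real.norm_eq_abs, key]
  have hbound : ∀ j, |v j - (M + m) / 2| ≤ (M - m) / 2 := by
    intro j
    have h1 : v j ≤ M := Finset.le_sup' _ (Finset.mem_univ j)
    have h2 : m ≤ v j := Finset.inf'_le _ (Finset.mem_univ j)
    rw [abs_le]; constructor <;> linarith
  calc |∑ j, (P - Pt) i j * (v j - (M + m) / 2)|
      ≤ ∑ j, |(P - Pt) i j * (v j - (M + m) / 2)| := Finset.abs_sum_le_sum_abs _ _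
    _ ≤ ∑ j, |(P - Pt) i j| * ((M - m) / 2) := by
        refine Finset.sum_le_sum fun j _ => ?_
        rw [abs_mul]
        exact mul_le_mul_of_nonneg_left (hbound j) (abs_nonneg _)
    _ = (∑ j, |(P - Pt) i j|) * ((M - m) / 2) := by rw [← Finset.sum_mul]
    _ ≤ S * ((M - m) / 2) := by
        exact mul_le_mul_of_nonneg_right
          (Finset.le_sup' (fun i => ∑ j, |(P - Pt) i j|) (Finset.mem_univ i))
          (by linarith)
    _ = (1 / 2) * S * (M - m) := by ring
end

section
/- Let φ̄: ℝ₊ → ℝ₊ be non-increasing and satisfy: there exist A > 0, λ ≥ 1, B ≥ 0 such that A·exp(−x) ≤ φ̄(x) ≤ λ·A·exp(−x) for all x ≥ B. Fix a point s and representative states s̄_1,…,s̄_m (m > 1), ordered so that dist(s,i) = ‖s − rs(s,i)‖ is nondecreasing in i, and suppose there is w ∈ {1,…,m−1} with dist(s,w) < dist(s,w+1). Let W = {k : ‖s − s̄_k‖ ≤ dist(s,w)} and W̄ its complement in {1,…,m}. Then for any α > 0, there exists τ̄₀ > 0 such that for all 0 < τ̄ < τ̄₀, ∑_{k ∈ W̄}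 φ̄(‖s − s̄_k‖/τ̄) < α · ∑_{k ∈ W} φ̄(‖s − s̄_k‖/τ̄). -/
/-- Let `φ̄ : ℝ → ℝ` be non-increasing on `[0,∞)` and eventually bounded above
and below by multiples of `exp(−x)`.  Fix `s` and representative states
`s̄_1,…,s̄_m` (`m > 1`), enumerated by a bijection `rs` ordering them by
nondecreasing distance to `s`, and suppose for some `w < m − 1` that
`dist(s,w) < dist(s,w+1)`.  Let `W = {k : ‖s − s̄_k‖ ≤ dist(s,w)}` and `W̄` its
complement.  Then for any `α > 0` there is `τ̄₀ > 0` such that for all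
`0 < τ̄ < τ̄₀`,
`∑_{k ∈ W̄} φ̄(‖s − s̄_k‖/τ̄) < α · ∑_{k ∈ W} φ̄(‖s − s̄_k‖/τ̄)`. -/
theorem kernel_tail_weight_small {E : Type*} [NormedAddCommGroup E]
    (φ : ℝ → ℝ)
    (hmono : ∀ x y : ℝ, 0 ≤ x → x ≤ y → φ y ≤ φ x)
    (A lam B : ℝ) (hA : 0 < A) (hlam : 1 ≤ lam) (hB : 0 ≤ B)
    (hbound : ∀ x : ℝ, B ≤ x → A * Real.exp (-x) ≤ φ x ∧ φ x ≤ lam * A * Real.exp (-x))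
    {m : ℕ} (hm : 1 < m) (s : E) (sb : Fin m → E)
    (rs : Fin m → Fin m) (hrs : Function.Bijective rs)
    (hsort : ∀ i j : Fin m, i ≤ j → ‖s - sb (rs i)‖ ≤ ‖s - sb (rs j)‖)
    (w : Fin m) (hw : (w : ℕ) + 1 < m)
    (hgap : ‖s - sb (rs w)‖ < ‖s - sb (rs ⟨(w : ℕ) + 1, hw⟩)‖) :
    ∀ α : ℝ, 0 < α → ∃ τ₀ : ℝ, 0 < τ₀ ∧ ∀ τ : ℝ, 0 < τ → τ < τ₀ →
      ∑ k ∈ Finset.univ.filter (fun k => ¬ ‖s - sb k‖ ≤ ‖s - sb (rs w)‖),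
          φ (‖s - sb k‖ / τ) <
        α * ∑ k ∈ Finset.univ.filter (fun k => ‖s - sb k‖ ≤ ‖s - sb (rs w)‖),
          φ (‖s - sb k‖ / τ) := by
  intro α hα
  set d1 := ‖s - sb (rs w)‖ with hd1def
  set d2 := ‖s - sb (rs ⟨(w : ℕ) + 1, hw⟩)‖ with hd2def
  have hd1nn : 0 ≤ d1 := norm_nonneg _
  have hd2pos : 0 < d2 := lt_of_le_of_lt hd1nn hgap
  have hεpos : 0 < d2 - d1 := sub_pos.mpr hgap
  have hmpos : (0:ℝ) < (m:ℝ) := by positivity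
  have hlampos : (0:ℝ) < lam := lt_of_lt_of_le one_pos hlam
  have hmlam : (0:ℝ) < (m:ℝ) * lam := mul_pos hmpos hlampos
  -- lower bound for φ on nonnegative reals
  have hφ_lb : ∀ x : ℝ, 0 ≤ x → A * Real.exp (-(max x B)) ≤ φ x := by
    intro x hx
    have h1 := (hbound (max x B) (le_max_right x B)).1
    have h2 := hmono x (max x B) hx (le_max_left x B)
    linarith
  have hφ_pos : ∀ x : ℝ, 0 ≤ x → 0 < φ x := by
    intro x hx
    have := hφ_lb x hx
    have : 0 < A * Real.exp (-(max x B)) := by positivity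
    linarith [hφ_lb x hx]
  set C := Real.log (α / ((m:ℝ) * lam)) with hCdef
  set K := |C| + 1 + B with hKdef
  have hKpos : 0 < K := by
    have := abs_nonneg C
    simp only [hKdef]; linarith
  have hBK : B ≤ K := by have := abs_nonneg C; simp only [hKdef]; linarith
  refine ⟨min d2 (d2 - d1) / K, by positivity, ?_⟩
  intro τ hτ hτlt
  have hτK : τ * K < min d2 (d2 - d1) := (lt_div_iff₀ hKpos).mp hτlt
  have hKd2 : K < d2 / τ := by
    rw [lt_div_iff₀ hτ]
    calc K * τ = τ * K := by ring
    _ < min d2 (d2 - d1) := hτK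
    _ ≤ d2 := min_le_left _ _
  have hKε : K < (d2 - d1) / τ := by
    rw [lt_div_iff₀ hτ]
    calc K * τ = τ * K := by ring
    _ < min d2 (d2 - d1) := hτK
    _ ≤ d2 - d1 := min_le_right _ _
  have hBd2τ : B ≤ d2 / τ := le_trans hBK hKd2.le
  -- every element of the complement has distance at least d2
  have hWbar : ∀ k : Fin m, ¬ ‖s - sb k‖ ≤ d1 → d2 ≤ ‖s - sb k‖ := by
    intro k hk
    obtain ⟨i, rfl⟩ := hrs.surjective k
    have hiw : ¬ i ≤ w := fun h => hk (hsort i w h)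
    have hwi : (w : ℕ) < (i : ℕ) := by
      have := not_le.mp hiw
      exact Fin.lt_def.mp this
    have : (⟨(w : ℕ) + 1, hw⟩ : Fin m) ≤ i := by
      rw [Fin.le_def]; exact hwi
    exact hsort _ i this
  set M := max (d1 / τ) B with hMdef
  -- the key exponential inequality
  have hlt : M - d2 / τ < C := by
    have hC1 : -(|C| + 1) < C := by
      have := neg_abs_le C; linarith
    rcases max_cases (d1 / τ) B with ⟨hM, _⟩ | ⟨hM, _⟩
    · rw [hMdef, hM]
      have h4 : (d1 - d2) / τ < -K := by
        have h := neg_lt_neg hKε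
        rw [← neg_div] at h
        have he : -(d2 - d1) = d1 - d2 := by ring
        rw [he] at h; exact h
      rw [div_sub_div_same]
      simp only [hKdef] at h4
      linarith
    · rw [hMdef, hM]
      simp only [hKdef] at hKd2
      linarith
  have hexpC : Real.exp C = α / ((m:ℝ) * lam) := Real.exp_log (by positivity)
  have h2 : Real.exp M * Real.exp (-(d2 / τ)) < α / ((m:ℝ) * lam) := by
    rw [← Real.exp_add, ← hexpC]
    exact Real.exp_lt_exp.mpr (by linarith)
  have h3 : (m:ℝ) * lam * Real.exp (-(d2 / τ)) < α * Real.exp (-M) := by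
    have hM := Real.exp_pos M
    rw [Real.exp_neg M, ← div_eq_mul_inv, lt_div_iff₀ hM]
    calc (m:ℝ) * lam * Real.exp (-(d2 / τ)) * Real.exp M
        = Real.exp M * Real.exp (-(d2 / τ)) * ((m:ℝ) * lam) := by ring
      _ < α / ((m:ℝ) * lam) * ((m:ℝ) * lam) := by
          exact mul_lt_mul_of_pos_right h2 hmlam
      _ = α := by field_simp
  -- bound the tail sum from above
  have hsum1 : ∑ k ∈ Finset.univ.filter (fun k => ¬ ‖s - sb k‖ ≤ d1),
      φ (‖s - sb k‖ / τ) ≤ (m:ℝ) * (lam * A * Real.exp (-(d2 / τ))) := by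
    calc ∑ k ∈ Finset.univ.filter (fun k => ¬ ‖s - sb k‖ ≤ d1), φ (‖s - sb k‖ / τ)
        ≤ ∑ _k ∈ Finset.univ.filter (fun k => ¬ ‖s - sb k‖ ≤ d1), φ (d2 / τ) := by
          refine Finset.sum_le_sum fun k hk => ?_
          have hk' := (Finset.mem_filter.mp hk).2
          have hd2k : d2 ≤ ‖s - sb k‖ := hWbar k hk'
          exact hmono (d2 / τ) (‖s - sb k‖ / τ) (by positivity)
            ((div_le_div_iff_of_pos_right hτ).mpr hd2k)
      _ = ((Finset.univ.filter (fun k => ¬ ‖s - sb k‖ ≤ d1)).card : ℝ) * φ (d2 / τ) := by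
          rw [Finset.sum_const, nsmul_eq_mul]
      _ ≤ (m:ℝ) * φ (d2 / τ) := by
          have hcard : (Finset.univ.filter (fun k => ¬ ‖s - sb k‖ ≤ d1)).card ≤ m := by
            calc (Finset.univ.filter (fun k => ¬ ‖s - sb k‖ ≤ d1)).card
                ≤ (Finset.univ : Finset (Fin m)).card := Finset.card_filter_le _ _
              _ = m := by simp
          exact mul_le_mul_of_nonneg_right (by exact_mod_cast hcard)
            (hφ_pos _ (by positivity)).le
      _ ≤ (m:ℝ) * (lam * A * Real.exp (-(d2 / τ))) := by
          exact mul_le_mul_of_nonneg_left (hbound (d2 / τ) hBd2τ).2 hmpos.le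
  -- bound the main sum from below
  have hWmem : rs w ∈ Finset.univ.filter (fun k => ‖s - sb k‖ ≤ d1) := by
    simp [hd1def]
  have hsum2 : φ (d1 / τ) ≤ ∑ k ∈ Finset.univ.filter (fun k => ‖s - sb k‖ ≤ d1),
      φ (‖s - sb k‖ / τ) := by
    exact Finset.single_le_sum (f := fun k => φ (‖s - sb k‖ / τ))
      (fun k _ => (hφ_pos _ (by positivity)).le) hWmem
  have hφd1 : A * Real.exp (-M) ≤ φ (d1 / τ) := hφ_lb (d1 / τ) (by positivity)
  calc ∑ k ∈ Finset.univ.filter (fun k => ¬ ‖s - sb k‖ ≤ d1), φ (‖s - sb k‖ / τ)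
      ≤ (m:ℝ) * (lam * A * Real.exp (-(d2 / τ))) := hsum1
    _ = A * ((m:ℝ) * lam * Real.exp (-(d2 / τ))) := by ring
    _ < A * (α * Real.exp (-M)) := mul_lt_mul_of_pos_left h3 hA
    _ = α * (A * Real.exp (-M)) := by ring
    _ ≤ α * φ (d1 / τ) := mul_le_mul_of_nonneg_left hφd1 hα.le
    _ ≤ α * ∑ k ∈ Finset.univ.filter (fun k => ‖s - sb k‖ ≤ d1), φ (‖s - sb k‖ / τ) :=
        mul_le_mul_of_nonneg_left hsum2 hα.le
end

section
/- Let M = (S, A, P^a, r^a, γ) and M̃ = (S, A, P̃^a, r̃^a, γ) be two finite MDPs sharing the same state space S (|S| = n), action set A, and discount factor 0 ≤ γ < 1. Then for every state s and action a, |Q*(s,a) − Q̃*(s,a)| ≤ (1/(1−γ))·max_a ‖r^a − r̃^a‖_∞ + (γ(2−γ)/(2(1−γ)²))·R_dif·max_a ‖P^a − P̃^a‖_∞, where Q* and Q̃* are the optimal action-value functions of M and M̃, and R_dif = max_{a,i} r^a_i − min_{a,i} r^a_i. -/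
open Finset

/-- Let `M = (S, A, P^a, r^a, γ)` and `M̃ = (S, A, P̃^a, r̃^a, γ)` be two finite
MDPs on the same state space, action set, and discount `0 ≤ γ < 1`, with
optimal action-value functions `Q*` and `Q̃*` (characterized by the Bellman
optimality equations).  Then for every `s` and `a`,
`|Q*(s,a) − Q̃*(s,a)| ≤ (1/(1−γ)) max_a ‖r^a − r̃^a‖_∞
   + (γ(2−γ)/(2(1−γ)²)) R_dif max_a ‖P^a − P̃^a‖_∞`,
where `R_dif = max_{a,s} r^a_s − min_{a,s} r^a_s`. -/
theorem mdp_optimal_q_diff_bound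
    {S A : Type*} [Fintype S] [Nonempty S] [Fintype A] [Nonempty A]
    (γ : ℝ) (hγ0 : 0 ≤ γ) (hγ1 : γ < 1)
    (P Pt : A → S → S → ℝ) (r rt : A → S → ℝ)
    (hP : ∀ a s s', 0 ≤ P a s s') (hProw : ∀ a s, ∑ s', P a s s' = 1)
    (hPt : ∀ a s s', 0 ≤ Pt a s s') (hPtrow : ∀ a s, ∑ s', Pt a s s' = 1)
    (Q Qt : S → A → ℝ)
    (hQ : ∀ s a, Q s a =
      r a s + γ * ∑ s', P a s s' * (univ.sup' univ_nonempty (fun a' => Q s' a')))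
    (hQt : ∀ s a, Qt s a =
      rt a s + γ * ∑ s', Pt a s s' * (univ.sup' univ_nonempty (fun a' => Qt s' a'))) :
    ∀ s a, |Q s a - Qt s a| ≤
      (1 / (1 - γ)) *
        (univ.sup' univ_nonempty (fun a' =>
          univ.sup' univ_nonempty (fun s' => |r a' s' - rt a' s'|))) +
      (γ * (2 - γ) / (2 * (1 - γ) ^ 2)) *
        ((univ.sup' univ_nonempty (fun p : A × S => r p.1 p.2) -
          univ.inf' univ_nonempty (fun p : A × S => r p.1 p.2))) *
        (univ.sup' univ_nonempty (fun a' =>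
          univ.sup' univ_nonempty (fun s' => ∑ s'', |P a' s' s'' - Pt a' s' s''|))) := by
  have h1γ : (0:ℝ) < 1 - γ := by linarith
  set V : S → ℝ := fun s => univ.sup' univ_nonempty (fun a' => Q s a') with hVdef
  set Vt : S → ℝ := fun s => univ.sup' univ_nonempty (fun a' => Qt s a') with hVtdef
  set εr : ℝ := univ.sup' univ_nonempty (fun a' =>
      univ.sup' univ_nonempty (fun s' => |r a' s' - rt a' s'|)) with hεrdef
  set εP : ℝ := univ.sup' univ_nonempty (fun a' =>
      univ.sup' univ_nonempty (fun s' => ∑ s'', |P a' s' s'' - Pt a' s' s''|)) with hεPdef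
  set Rmax : ℝ := univ.sup' univ_nonempty (fun p : A × S => r p.1 p.2) with hRmaxdef
  set Rmin : ℝ := univ.inf' univ_nonempty (fun p : A × S => r p.1 p.2) with hRmindef
  set Δ : ℝ := (univ : Finset (S × A)).sup' univ_nonempty
      (fun p => |Q p.1 p.2 - Qt p.1 p.2|) with hΔdef
  set Mx : ℝ := (univ : Finset (S × A)).sup' univ_nonempty (fun p => Q p.1 p.2) with hMxdef
  set Mn : ℝ := (univ : Finset (S × A)).inf' univ_nonempty (fun p => Q p.1 p.2) with hMndef
  -- basic bounds
  have hQleMx : ∀ s a, Q s a ≤ Mx := fun s a =>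
    le_sup' (fun p : S × A => Q p.1 p.2) (mem_univ (s, a))
  have hMnleQ : ∀ s a, Mn ≤ Q s a := fun s a =>
    inf'_le (fun p : S × A => Q p.1 p.2) (mem_univ (s, a))
  have hVleMx : ∀ s, V s ≤ Mx := fun s => sup'_le _ _ (fun a _ => hQleMx s a)
  have hMnleV : ∀ s, Mn ≤ V s := fun s => by
    obtain ⟨a⟩ := ‹Nonempty A›
    exact le_trans (hMnleQ s a) (le_sup' _ (mem_univ a))
  have hrleRmax : ∀ a s, r a s ≤ Rmax := fun a s =>
    le_sup' (fun p : A × S => r p.1 p.2) (mem_univ (a, s))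
  have hRminler : ∀ a s, Rmin ≤ r a s := fun a s =>
    inf'_le (fun p : A × S => r p.1 p.2) (mem_univ (a, s))
  have hQΔ : ∀ s a, |Q s a - Qt s a| ≤ Δ := fun s a =>
    le_sup' (fun p : S × A => |Q p.1 p.2 - Qt p.1 p.2|) (mem_univ (s, a))
  have hVΔ : ∀ s, |V s - Vt s| ≤ Δ := by
    intro s
    rw [abs_sub_le_iff]
    constructor
    · rw [sub_le_iff_le_add]
      refine sup'_le _ _ (fun a _ => ?_)
      have := hQΔ s a
      have h2 : Qt s a ≤ Vt s := le_sup' (fun a' => Qt s a') (mem_univ a)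
      have := abs_le.mp this
      linarith [this.2]
    · rw [sub_le_iff_le_add]
      refine sup'_le _ _ (fun a _ => ?_)
      have := abs_le.mp (hQΔ s a)
      have h2 : Q s a ≤ V s := le_sup' (fun a' => Q s a') (mem_univ a)
      linarith [this.1]
  have hεrnn : ∀ a s, |r a s - rt a s| ≤ εr := by
    intro a s
    refine le_trans (le_sup' (fun s' => |r a s' - rt a s'|) (mem_univ s)) ?_
    exact le_sup' (fun a' => univ.sup' univ_nonempty (fun s' => |r a' s' - rt a' s'|))
      (mem_univ a)
  have hεPbound : ∀ a s, ∑ s'', |P a s s'' - Pt a s s''| ≤ εP := by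
    intro a s
    refine le_trans (le_sup' (fun s' => ∑ s'', |P a s' s'' - Pt a s' s''|) (mem_univ s)) ?_
    exact le_sup' (fun a' => univ.sup' univ_nonempty
      (fun s' => ∑ s'', |P a' s' s'' - Pt a' s' s''|)) (mem_univ a)
  have hεP0 : 0 ≤ εP := by
    obtain ⟨a⟩ := ‹Nonempty A›; obtain ⟨s⟩ := ‹Nonempty S›
    exact le_trans (Finset.sum_nonneg (fun _ _ => abs_nonneg _)) (hεPbound a s)
  have hεr0 : 0 ≤ εr := by
    obtain ⟨a⟩ := ‹Nonempty A›; obtain ⟨s⟩ := ‹Nonempty S›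
    exact le_trans (abs_nonneg _) (hεrnn a s)
  have hMnMx : Mn ≤ Mx := by
    obtain ⟨a⟩ := ‹Nonempty A›; obtain ⟨s⟩ := ‹Nonempty S›
    exact le_trans (hMnleQ s a) (hQleMx s a)
  -- span bound: (1-γ)*(Mx - Mn) ≤ Rmax - Rmin
  have hMxb : Mx ≤ Rmax + γ * Mx := by
    obtain ⟨p, -, hp⟩ := exists_mem_eq_sup' (univ_nonempty)
      (fun p : S × A => Q p.1 p.2)
    have hMxeq : Mx = Q p.1 p.2 := by rw [hMxdef, hp]
    nth_rewrite 1 [hMxeq]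
    rw [hQ p.1 p.2]
    have hsum : ∑ s', P p.2 p.1 s' * V s' ≤ Mx := by
      calc ∑ s', P p.2 p.1 s' * V s' ≤ ∑ s', P p.2 p.1 s' * Mx :=
            Finset.sum_le_sum (fun s' _ =>
              mul_le_mul_of_nonneg_left (hVleMx s') (hP _ _ _))
        _ = Mx := by rw [← Finset.sum_mul, hProw, one_mul]
    have := mul_le_mul_of_nonneg_left hsum hγ0
    exact add_le_add (hrleRmax _ _) this
  have hMnb : Rmin + γ * Mn ≤ Mn := by
    obtain ⟨p, -, hp⟩ := exists_mem_eq_inf' (univ_nonempty)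
      (fun p : S × A => Q p.1 p.2)
    have hMneq : Mn = Q p.1 p.2 := by rw [hMndef, hp]
    nth_rewrite 2 [hMneq]
    rw [hQ p.1 p.2]
    have hsum : Mn ≤ ∑ s', P p.2 p.1 s' * V s' := by
      calc Mn = ∑ s', P p.2 p.1 s' * Mn := by rw [← Finset.sum_mul, hProw, one_mul]
        _ ≤ ∑ s', P p.2 p.1 s' * V s' :=
            Finset.sum_le_sum (fun s' _ =>
              mul_le_mul_of_nonneg_left (hMnleV s') (hP _ _ _))
    have := mul_le_mul_of_nonneg_left hsum hγ0
    exact add_le_add (hRminler _ _) this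
  have hspan : (1 - γ) * (Mx - Mn) ≤ Rmax - Rmin := by nlinarith
  have hRdif0 : 0 ≤ Rmax - Rmin := by
    obtain ⟨a⟩ := ‹Nonempty A›; obtain ⟨s⟩ := ‹Nonempty S›
    linarith [hrleRmax a s, hRminler a s]
  -- main pointwise inequality
  have hmain : ∀ p : S × A,
      |Q p.1 p.2 - Qt p.1 p.2| ≤ εr + γ * (εP * (Mx - Mn) / 2 + Δ) := by
    rintro ⟨s, a⟩
    have hdec : Q s a - Qt s a = (r a s - rt a s)
        + γ * ((∑ s', (P a s s' - Pt a s s') * (V s' - (Mx + Mn) / 2))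
               + ∑ s', Pt a s s' * (V s' - Vt s')) := by
      have hzero : ∑ s', (P a s s' - Pt a s s') = 0 := by
        rw [Finset.sum_sub_distrib, hProw, hPtrow, sub_self]
      have e1 : ∑ s', (P a s s' - Pt a s s') * (V s' - (Mx + Mn) / 2)
          = ∑ s', (P a s s' - Pt a s s') * V s'
            - (∑ s', (P a s s' - Pt a s s')) * ((Mx + Mn) / 2) := by
        rw [Finset.sum_mul]
        rw [← Finset.sum_sub_distrib]
        exact Finset.sum_congr rfl (fun s' _ => by ring)
      rw [hQ s a, hQt s a, e1, hzero]
      have e2 : ∑ s', (P a s s' - Pt a s s') * V s'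
          = ∑ s', P a s s' * V s' - ∑ s', Pt a s s' * V s' := by
        rw [← Finset.sum_sub_distrib]
        exact Finset.sum_congr rfl (fun s' _ => by ring)
      have e3 : ∑ s', Pt a s s' * (V s' - Vt s')
          = ∑ s', Pt a s s' * V s' - ∑ s', Pt a s s' * Vt s' := by
        rw [← Finset.sum_sub_distrib]
        exact Finset.sum_congr rfl (fun s' _ => by ring)
      rw [e2, e3]; ring
    rw [hdec]
    refine le_trans (abs_add_le _ _) (add_le_add (hεrnn a s) ?_)
    rw [abs_mul, abs_of_nonneg hγ0]
    refine mul_le_mul_of_nonneg_left (le_trans (abs_add_le _ _) (add_le_add ?_ ?_)) hγ0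
    · -- |∑ (P - Pt)(V - c)| ≤ εP * (Mx - Mn) / 2
      refine le_trans (Finset.abs_sum_le_sum_abs _ _) ?_
      calc ∑ s', |(P a s s' - Pt a s s') * (V s' - (Mx + Mn) / 2)|
          ≤ ∑ s', |P a s s' - Pt a s s'| * ((Mx - Mn) / 2) := by
            refine Finset.sum_le_sum (fun s' _ => ?_)
            rw [abs_mul]
            refine mul_le_mul_of_nonneg_left ?_ (abs_nonneg _)
            rw [abs_le]
            constructor <;> [linarith [hMnleV s']; linarith [hVleMx s']]
        _ = (∑ s', |P a s s' - Pt a s s'|) * ((Mx - Mn) / 2) := by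
            rw [Finset.sum_mul]
        _ ≤ εP * ((Mx - Mn) / 2) := by
            refine mul_le_mul_of_nonneg_right (hεPbound a s) (by linarith)
        _ = εP * (Mx - Mn) / 2 := by ring
    · -- |∑ Pt (V - Vt)| ≤ Δ
      refine le_trans (Finset.abs_sum_le_sum_abs _ _) ?_
      calc ∑ s', |Pt a s s' * (V s' - Vt s')|
          ≤ ∑ s', Pt a s s' * Δ := by
            refine Finset.sum_le_sum (fun s' _ => ?_)
            rw [abs_mul, abs_of_nonneg (hPt a s s')]
            exact mul_le_mul_of_nonneg_left (hVΔ s') (hPt a s s')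
        _ = Δ := by rw [← Finset.sum_mul, hPtrow, one_mul]
  have hΔle : Δ ≤ εr + γ * (εP * (Mx - Mn) / 2 + Δ) :=
    sup'_le _ _ (fun p _ => hmain p)
  -- solve
  intro s a
  refine le_trans (hQΔ s a) ?_
  have key : Δ * (1 - γ) ^ 2 ≤ (1 - γ) * εr + γ * εP * (Rmax - Rmin) / 2 := by
    nlinarith [mul_le_mul_of_nonneg_left hΔle h1γ.le,
      mul_le_mul_of_nonneg_left hspan (mul_nonneg hγ0 hεP0)]
  rw [← sub_nonneg]
  have expand : (1 / (1 - γ)) * εr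
        + (γ * (2 - γ) / (2 * (1 - γ) ^ 2)) * (Rmax - Rmin) * εP - Δ
      = (((1 - γ) * εr + γ * (2 - γ) * (Rmax - Rmin) * εP / 2) - Δ * (1 - γ) ^ 2)
        / (1 - γ) ^ 2 := by
    field_simp
  rw [expand]
  apply div_nonneg _ (sq_nonneg _)
  have h2 : γ * εP * (Rmax - Rmin) / 2 ≤ γ * (2 - γ) * (Rmax - Rmin) * εP / 2 := by
    nlinarith [mul_nonneg (mul_nonneg (mul_nonneg hγ0 h1γ.le) hRdif0) hεP0]
  linarith
end

section
/- Let M = (S, A, P^a, r^a, γ) be a finite MDP with |S| = n and 0 ≤ γ < 1, D ∈ ℝ^{n×m} a stochastic matrix, and for each a ∈ A let K^a ∈ ℝ^{m×n} be stochastic and r̄^a ∈ ℝ^m. Define M̄ = (S̄, A, K^a·D, r̄^a, γ) with |S̄| = m, and let v* be the optimal value function of M and Q̄* the optimal action-value function of M̄. Then ‖v* − Γ(D·Q̄*)‖_∞ ≤ (1/(1−γ))·max_a ‖r^a − D·r̄^a‖_∞ + (R̄_dif/(1−γ)²)·((γ/2)·max_a ‖P^a − D·K^a‖_∞ + σ(D)),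 where Γ takes row-wise maxima, R̄_dif = max_{a,i} r̄^a_i − min_{a,i} r̄^a_i, and σ(D) = max_i (1 − max_j d_{ij}). -/
/-!
Write `Φ = Γ(D Q̄*)` and `E = D v̄*` with `v̄* = Γ Q̄*`. Since `v*` is the fixed point of the
`γ`-contracting Bellman operator `T` of `M`, `‖v* − Φ‖ ≤ ‖TΦ − Φ‖ / (1 − γ)`. The values of `Q̄*`
lie in an interval of length `C = R̄_dif / (1 − γ)`, which gives `‖Φ − E‖ ≤ σ(D) C`. The Bellman
equation of `M̄` gives `D Q̄*(·, a) = D r̄^a + γ (D K^a) E`, so action by action `TΦ − Φ` splits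
into the reward error `r^a − D r̄^a`, the term `γ P^a (Φ − E)` of size at most `σ(D) C`, and
`γ (P^a − D K^a) E`; as the rows of `P^a − D K^a` sum to zero and `E` takes values in an interval
of length `C`, the last term is at most `(γ / 2) ‖P^a − D K^a‖_∞ C`.
-/

open Finset Matrix

section

variable {ι κ μ α : Type*} [Fintype κ]

def IsRowStochastic (M : Matrix ι κ ℝ) : Prop :=
  (∀ i j, 0 ≤ M i j) ∧ ∀ i, ∑ j, M i j = 1

theorem IsRowStochastic.mul [Fintype μ] {M : Matrix ι κ ℝ} {N : Matrix κ μ ℝ}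
    (hM : IsRowStochastic M) (hN : IsRowStochastic N) : IsRowStochastic (M * N) := by
  refine ⟨fun i k => sum_nonneg fun j _ => mul_nonneg (hM.1 i j) (hN.1 j k), fun i => ?_⟩
  simp only [mul_apply]
  rw [sum_comm]
  simp only [← mul_sum, hN.2, mul_one, hM.2]

theorem IsRowStochastic.mulVec_le {M : Matrix ι κ ℝ} (hM : IsRowStochastic M)
    {x : κ → ℝ} {c : ℝ} (hx : ∀ j, x j ≤ c) (i : ι) : (M *ᵥ x) i ≤ c :=
  calc (M *ᵥ x) i ≤ ∑ j, M i j * c :=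
        sum_le_sum fun j _ => mul_le_mul_of_nonneg_left (hx j) (hM.1 i j)
    _ = c := by rw [← sum_mul, hM.2, one_mul]

theorem IsRowStochastic.le_mulVec {M : Matrix ι κ ℝ} (hM : IsRowStochastic M)
    {x : κ → ℝ} {c : ℝ} (hx : ∀ j, c ≤ x j) (i : ι) : c ≤ (M *ᵥ x) i :=
  calc c = ∑ j, M i j * c := by rw [← sum_mul, hM.2, one_mul]
    _ ≤ (M *ᵥ x) i := sum_le_sum fun j _ => mul_le_mul_of_nonneg_left (hx j) (hM.1 i j)

theorem IsRowStochastic.norm_mulVec_le [Fintype ι] {M : Matrix ι κ ℝ} (hM : IsRowStochastic M)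
    (x : κ → ℝ) : ‖M *ᵥ x‖ ≤ ‖x‖ := by
  refine (pi_norm_le_iff_of_nonneg (norm_nonneg x)).2 fun i => abs_le.2 ⟨?_, ?_⟩
  · exact hM.le_mulVec (fun j => neg_le_of_abs_le (norm_le_pi_norm x j)) i
  · exact hM.mulVec_le (fun j => le_of_abs_le (norm_le_pi_norm x j)) i

theorem abs_dotProduct_le_of_sum_eq_zero {e w : κ → ℝ} (he : ∑ j, e j = 0) {lo C : ℝ}
    (hw : ∀ j, w j ∈ Set.Icc lo (lo + C)) : |e ⬝ᵥ w| ≤ (∑ j, |e j|) * C / 2 := by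
  have hcentre : e ⬝ᵥ w = ∑ j, e j * (w j - (lo + C / 2)) := by
    simp only [dotProduct, mul_sub, sum_sub_distrib, ← sum_mul, he, zero_mul, sub_zero]
  rw [hcentre, sum_mul, sum_div]
  refine (abs_sum_le_sum_abs _ _).trans (sum_le_sum fun j _ => ?_)
  rw [abs_mul, mul_div_assoc]
  refine mul_le_mul_of_nonneg_left (abs_le.2 ⟨?_, ?_⟩) (abs_nonneg _) <;>
    linarith [(hw j).1, (hw j).2]

theorem IsRowStochastic.abs_sub_mulVec_le {P M : Matrix ι κ ℝ} (hP : IsRowStochastic P)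
    (hM : IsRowStochastic M) {w : κ → ℝ} {lo C : ℝ} (hw : ∀ j, w j ∈ Set.Icc lo (lo + C))
    (i : ι) : |((P - M) *ᵥ w) i| ≤ (∑ j, |(P - M) i j|) * C / 2 :=
  abs_dotProduct_le_of_sum_eq_zero
    (by simp only [Matrix.sub_apply, sum_sub_distrib, hP.2, hM.2, sub_self]) hw

section rowMax

variable [Fintype α] [Nonempty α]

def rowMax (Q : Matrix ι α ℝ) : ι → ℝ := fun i => univ.sup' univ_nonempty (Q i)

theorem le_rowMax (Q : Matrix ι α ℝ) (i : ι) (a : α) : Q i a ≤ rowMax Q i :=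
  le_sup' (Q i) (mem_univ a)

theorem rowMax_le {Q : Matrix ι α ℝ} {i : ι} {c : ℝ} (h : ∀ a, Q i a ≤ c) : rowMax Q i ≤ c :=
  sup'_le _ _ fun a _ => h a

theorem abs_rowMax_sub_rowMax_le {Q Q' : Matrix ι α ℝ} {i : ι} {c : ℝ}
    (h : ∀ a, |Q i a - Q' i a| ≤ c) : |rowMax Q i - rowMax Q' i| ≤ c := by
  refine abs_sub_le_iff.2 ⟨sub_le_iff_le_add.2 (rowMax_le fun a => ?_),
    sub_le_iff_le_add.2 (rowMax_le fun a => ?_)⟩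
  · linarith [le_rowMax Q' i a, (abs_sub_le_iff.1 (h a)).1]
  · linarith [le_rowMax Q i a, (abs_sub_le_iff.1 (h a)).2]

theorem rowMax_mul_le_mulVec_rowMax {D : Matrix ι κ ℝ} (hD : ∀ i j, 0 ≤ D i j)
    (Q : Matrix κ α ℝ) (i : ι) : rowMax (D * Q) i ≤ (D *ᵥ rowMax Q) i :=
  rowMax_le fun a =>
    sum_le_sum fun j _ => mul_le_mul_of_nonneg_left (le_rowMax Q j a) (hD i j)

end rowMax

section nondeterminism

variable [Nonempty κ]

def nondeterminism [Fintype ι] [Nonempty ι] (D : Matrix ι κ ℝ) : ℝ :=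
  univ.sup' univ_nonempty fun i => 1 - univ.sup' univ_nonempty (D i)

theorem one_sub_sup'_le_nondeterminism [Fintype ι] [Nonempty ι] (D : Matrix ι κ ℝ) (i : ι) :
    1 - univ.sup' univ_nonempty (D i) ≤ nondeterminism D :=
  le_sup' (fun i => 1 - univ.sup' univ_nonempty (D i)) (mem_univ i)

theorem nondeterminism_nonneg [Fintype ι] [Nonempty ι] {D : Matrix ι κ ℝ}
    (hD : IsRowStochastic D) : 0 ≤ nondeterminism D := by
  obtain ⟨i⟩ := ‹Nonempty ι›
  refine (sub_nonneg.2 (sup'_le _ _ fun j _ => ?_)).trans (one_sub_sup'_le_nondeterminism D i)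
  exact hD.2 i ▸ single_le_sum (fun j _ => hD.1 i j) (mem_univ j)

variable [Fintype α] [Nonempty α]

/-- Replacing `max_a ∑_j D i j Q j a` by `∑_j D i j max_a Q j a` costs nothing in the row
`j₀` where `D i` is largest, when both are evaluated at an action `a₀` optimal for `j₀`. -/
theorem mulVec_rowMax_sub_rowMax_mul_le {D : Matrix ι κ ℝ} (hD : IsRowStochastic D)
    {Q : Matrix κ α ℝ} {lo C : ℝ} (hQ : ∀ j a, Q j a ∈ Set.Icc lo (lo + C)) (i : ι) :
    (D *ᵥ rowMax Q) i - rowMax (D * Q) i ≤ (1 - univ.sup' univ_nonempty (D i)) * C := by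
  classical
  obtain ⟨j₀, -, hj₀⟩ := exists_mem_eq_sup' univ_nonempty (D i)
  obtain ⟨a₀, -, ha₀⟩ := exists_mem_eq_sup' univ_nonempty (Q j₀)
  have hgap : ∀ j, rowMax Q j - Q j a₀ ≤ C := fun j => by
    linarith [rowMax_le fun a => (hQ j a).2, (hQ j a₀).1]
  have hgap₀ : rowMax Q j₀ - Q j₀ a₀ = 0 := sub_eq_zero.2 ha₀
  calc (D *ᵥ rowMax Q) i - rowMax (D * Q) i
      ≤ (D *ᵥ rowMax Q) i - (D * Q) i a₀ := by gcongr; exact le_rowMax (D * Q) i a₀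
    _ = ∑ j, D i j * (rowMax Q j - Q j a₀) := by
        simp only [mulVec, dotProduct, mul_apply, ← sum_sub_distrib, mul_sub]
    _ = ∑ j ∈ univ.erase j₀, D i j * (rowMax Q j - Q j a₀) := by
        rw [sum_erase_eq_sub (mem_univ j₀), hgap₀, mul_zero, sub_zero]
    _ ≤ ∑ j ∈ univ.erase j₀, D i j * C :=
        sum_le_sum fun j _ => mul_le_mul_of_nonneg_left (hgap j) (hD.1 i j)
    _ = (1 - univ.sup' univ_nonempty (D i)) * C := by
        rw [← sum_mul, sum_erase_eq_sub (mem_univ j₀), hD.2 i, hj₀]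

theorem norm_rowMax_mul_sub_mulVec_rowMax_le [Fintype ι] [Nonempty ι] {D : Matrix ι κ ℝ}
    (hD : IsRowStochastic D) {Q : Matrix κ α ℝ} {lo C : ℝ}
    (hQ : ∀ j a, Q j a ∈ Set.Icc lo (lo + C)) :
    ‖rowMax (D * Q) - D *ᵥ rowMax Q‖ ≤ nondeterminism D * C := by
  obtain ⟨j⟩ := ‹Nonempty κ›
  obtain ⟨a⟩ := ‹Nonempty α›
  have hC : 0 ≤ C := by linarith [(hQ j a).1, (hQ j a).2]
  refine (pi_norm_le_iff_of_nonneg (mul_nonneg (nondeterminism_nonneg hD) hC)).2 fun i => ?_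
  rw [Pi.sub_apply, Real.norm_eq_abs, abs_sub_comm, abs_of_nonneg
    (sub_nonneg.2 (rowMax_mul_le_mulVec_rowMax hD.1 Q i))]
  exact (mulVec_rowMax_sub_rowMax_mul_le hD hQ i).trans
    (mul_le_mul_of_nonneg_right (one_sub_sup'_le_nondeterminism D i) hC)

end nondeterminism

def spread {β : Type*} [Fintype β] [Nonempty β] (f : β → ℝ) : ℝ :=
  univ.sup' univ_nonempty f - univ.inf' univ_nonempty f

/-- Every value `r a x + γ (P a *ᵥ rowMax Q) x` of `Q` lies between `min r + γ min Q` and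
`max r + γ max Q`, so the spread of `Q` is at most `spread r + γ spread Q`. -/
theorem exists_forall_mem_Icc_of_eq_reward_add_mulVec_rowMax [Fintype α] [Nonempty κ] [Nonempty α]
    {γ : ℝ} (hγ0 : 0 ≤ γ) (hγ1 : γ < 1) {P : α → Matrix κ κ ℝ}
    (hP : ∀ a, IsRowStochastic (P a)) {r : α → κ → ℝ} {Q : Matrix κ α ℝ}
    (hQ : ∀ x a, Q x a = r a x + γ * (P a *ᵥ rowMax Q) x) :
    ∃ lo, ∀ x a, Q x a ∈ Set.Icc lo (lo + spread (fun p : α × κ => r p.1 p.2) / (1 - γ)) := by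
  set S := univ.sup' univ_nonempty fun p : κ × α => Q p.1 p.2
  set I := univ.inf' univ_nonempty fun p : κ × α => Q p.1 p.2
  have hS : ∀ x a, Q x a ≤ S := fun x a => le_sup' (fun p : κ × α => Q p.1 p.2) (mem_univ (x, a))
  have hI : ∀ x a, I ≤ Q x a := fun x a => inf'_le (fun p : κ × α => Q p.1 p.2) (mem_univ (x, a))
  have hSr : S ≤ univ.sup' univ_nonempty (fun p : α × κ => r p.1 p.2) + γ * S := by
    refine sup'_le _ _ fun ⟨x, a⟩ _ => ?_
    have hv := mul_le_mul_of_nonneg_left ((hP a).mulVec_le (fun y => rowMax_le (hS y)) x) hγ0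
    have hr := le_sup' (fun p : α × κ => r p.1 p.2) (mem_univ (a, x))
    dsimp only at hr ⊢
    linarith [hQ x a]
  have hIr : univ.inf' univ_nonempty (fun p : α × κ => r p.1 p.2) + γ * I ≤ I := by
    refine le_inf' _ _ fun ⟨x, a⟩ _ => ?_
    have hv := mul_le_mul_of_nonneg_left
      ((hP a).le_mulVec (fun y => (hI y a).trans (le_rowMax Q y a)) x) hγ0
    have hr := inf'_le (fun p : α × κ => r p.1 p.2) (mem_univ (a, x))
    dsimp only at hr ⊢
    linarith [hQ x a]
  have hSI : (S - I) * (1 - γ) ≤ spread (fun p : α × κ => r p.1 p.2) := by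
    unfold spread; linarith
  exact ⟨I, fun x a => ⟨hI x a, by linarith [hS x a, (le_div_iff₀ (sub_pos.2 hγ1)).2 hSI]⟩⟩

theorem mul_apply_eq_of_eq_add_mulVec [Fintype ι] {D : Matrix ι κ ℝ} {K : α → Matrix κ ι ℝ}
    {rb : α → κ → ℝ} {Q : Matrix κ α ℝ} {γ : ℝ} {w : κ → ℝ}
    (hQ : ∀ x a, Q x a = rb a x + γ * ((K a * D) *ᵥ w) x) (i : ι) (a : α) :
    (D * Q) i a = (D *ᵥ rb a) i + γ * ((D * K a) *ᵥ (D *ᵥ w)) i := by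
  have hcol : (fun j => Q j a) = rb a + γ • ((K a * D) *ᵥ w) := funext fun j => hQ j a
  change (D *ᵥ fun j => Q j a) i = _
  rw [hcol, mulVec_add, mulVec_smul, mulVec_mulVec, ← Matrix.mul_assoc, ← mulVec_mulVec]
  rfl

section bellman

variable [Fintype ι] [Fintype α] [Nonempty α]

def bellman (γ : ℝ) (P : α → Matrix ι ι ℝ) (r : α → ι → ℝ) (w : ι → ℝ) : ι → ℝ :=
  rowMax fun i a => r a i + γ * (P a *ᵥ w) i

theorem dist_bellman_le {γ : ℝ} (hγ0 : 0 ≤ γ) {P : α → Matrix ι ι ℝ}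
    (hP : ∀ a, IsRowStochastic (P a)) (r : α → ι → ℝ) (w w' : ι → ℝ) :
    dist (bellman γ P r w) (bellman γ P r w') ≤ γ * dist w w' := by
  rw [dist_eq_norm, dist_eq_norm]
  refine (pi_norm_le_iff_of_nonneg (mul_nonneg hγ0 (norm_nonneg _))).2 fun i => ?_
  refine abs_rowMax_sub_rowMax_le fun a => ?_
  rw [add_sub_add_left_eq_sub, ← mul_sub, ← Pi.sub_apply, ← mulVec_sub, abs_mul, abs_of_nonneg hγ0]
  exact mul_le_mul_of_nonneg_left ((norm_le_pi_norm _ i).trans ((hP a).norm_mulVec_le _)) hγ0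

theorem norm_sub_le_of_isFixedPt_bellman {γ : ℝ} (hγ0 : 0 ≤ γ) (hγ1 : γ < 1)
    {P : α → Matrix ι ι ℝ} (hP : ∀ a, IsRowStochastic (P a)) {r : α → ι → ℝ} {v : ι → ℝ}
    (hv : Function.IsFixedPt (bellman γ P r) v) (w : ι → ℝ) :
    ‖v - w‖ ≤ ‖bellman γ P r w - w‖ / (1 - γ) := by
  have hT : ContractingWith γ.toNNReal (bellman γ P r) :=
    ⟨Real.toNNReal_lt_one.2 hγ1, LipschitzWith.of_dist_le_mul fun w w' => by
      rw [Real.coe_toNNReal γ hγ0]; exact dist_bellman_le hγ0 hP r w w'⟩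
  simpa only [dist_eq_norm, norm_sub_rev w, Real.coe_toNNReal γ hγ0] using
    hT.dist_le_of_fixedPoint w hv

theorem norm_bellman_rowMax_mul_sub_le [Nonempty ι] [Nonempty κ] {γ : ℝ} (hγ0 : 0 ≤ γ)
    (hγ1 : γ ≤ 1) {P : α → Matrix ι ι ℝ} (hP : ∀ a, IsRowStochastic (P a)) (r : α → ι → ℝ)
    {D : Matrix ι κ ℝ} (hD : IsRowStochastic D) {K : α → Matrix κ ι ℝ}
    (hK : ∀ a, IsRowStochastic (K a)) {rb : α → κ → ℝ} {Q : Matrix κ α ℝ}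
    (hQ : ∀ x a, Q x a = rb a x + γ * ((K a * D) *ᵥ rowMax Q) x)
    {lo C : ℝ} (hC : ∀ x a, Q x a ∈ Set.Icc lo (lo + C)) {εr εP : ℝ}
    (hr : ∀ a, ‖r a - D *ᵥ rb a‖ ≤ εr) (hPK : ∀ a i, ∑ j, |(P a - D * K a) i j| ≤ εP) :
    ‖bellman γ P r (rowMax (D * Q)) - rowMax (D * Q)‖ ≤
      εr + C * (γ / 2 * εP + nondeterminism D) := by
  obtain ⟨a₁⟩ := ‹Nonempty α›
  obtain ⟨x₁⟩ := ‹Nonempty κ›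
  set Φ := rowMax (D * Q)
  set E := D *ᵥ rowMax Q
  have hC0 : 0 ≤ C := by linarith [(hC x₁ a₁).1, (hC x₁ a₁).2]
  have hσ := nondeterminism_nonneg hD
  have hDQ := mul_apply_eq_of_eq_add_mulVec (D := D) hQ
  have hΦE : ‖Φ - E‖ ≤ nondeterminism D * C := norm_rowMax_mul_sub_mulVec_rowMax_le hD hC
  have hE : ∀ z, E z ∈ Set.Icc lo (lo + C) := fun z =>
    ⟨hD.le_mulVec (fun y => (hC y a₁).1.trans (le_rowMax Q y a₁)) z,
      hD.mulVec_le (fun y => rowMax_le fun a => (hC y a).2) z⟩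
  refine (pi_norm_le_iff_of_nonempty _).2 fun i => ?_
  refine abs_rowMax_sub_rowMax_le fun a => ?_
  have hsplit : r a i + γ * (P a *ᵥ Φ) i - ((D *ᵥ rb a) i + γ * ((D * K a) *ᵥ E) i) =
      (r a - D *ᵥ rb a) i + γ * ((P a *ᵥ (Φ - E)) i + ((P a - D * K a) *ᵥ E) i) := by
    simp only [Pi.sub_apply, mulVec_sub, sub_mulVec]
    ring
  have hreward : |(r a - D *ᵥ rb a) i| ≤ εr := (norm_le_pi_norm _ i).trans (hr a)
  have hvalue : |(P a *ᵥ (Φ - E)) i| ≤ nondeterminism D * C :=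
    (norm_le_pi_norm _ i).trans (((hP a).norm_mulVec_le _).trans hΦE)
  have htransition : |((P a - D * K a) *ᵥ E) i| ≤ εP * C / 2 :=
    ((hP a).abs_sub_mulVec_le (hD.mul (hK a)) hE i).trans (by gcongr; exact hPK a i)
  rw [hDQ, hsplit]
  calc _ ≤ |(r a - D *ᵥ rb a) i| + γ * (|(P a *ᵥ (Φ - E)) i| + |((P a - D * K a) *ᵥ E) i|) := by
        refine (abs_add_le _ _).trans (add_le_add_right ?_ _)
        rw [abs_mul, abs_of_nonneg hγ0]
        exact mul_le_mul_of_nonneg_left (abs_add_le _ _) hγ0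
    _ ≤ εr + γ * (nondeterminism D * C + εP * C / 2) := by gcongr
    _ ≤ εr + C * (γ / 2 * εP + nondeterminism D) := by
        nlinarith [mul_nonneg (sub_nonneg.2 hγ1) (mul_nonneg hσ hC0)]

end bellman

end

/-- Error bound for the stochastic-factorization trick (Proposition 1).
Let `M = (S,A,P^a,r^a,γ)` be a finite MDP with `|S| = n` and `0 ≤ γ < 1`,
`D ∈ ℝ^{n×m}` stochastic, and for each `a` let `K^a ∈ ℝ^{m×n}` be stochastic
and `r̄^a ∈ ℝ^m`.  Let `v*` be the optimal value function of `M` (fixed point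
of the Bellman optimality operator) and `Q̄*` the optimal action-value function
of the reduced MDP `M̄ = (S̄,A,K^a·D,r̄^a,γ)`.  Then
`‖v* − Γ(D·Q̄*)‖_∞ ≤ (1/(1−γ)) max_a ‖r^a − D r̄^a‖_∞
  + (R̄_dif/(1−γ)²) ((γ/2) max_a ‖P^a − D K^a‖_∞ + σ(D))`. -/
theorem kbsf_value_error_bound
    {n m : ℕ} [NeZero n] [NeZero m] {A : Type*} [Fintype A] [Nonempty A]
    (γ : ℝ) (hγ0 : 0 ≤ γ) (hγ1 : γ < 1)
    (P : A → Matrix (Fin n) (Fin n) ℝ) (r : A → Fin n → ℝ)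
    (hP : ∀ a, (∀ i j, 0 ≤ P a i j) ∧ (∀ i, ∑ j, P a i j = 1))
    (D : Matrix (Fin n) (Fin m) ℝ)
    (hD : (∀ i j, 0 ≤ D i j) ∧ (∀ i, ∑ j, D i j = 1))
    (K : A → Matrix (Fin m) (Fin n) ℝ)
    (hK : ∀ a, (∀ i j, 0 ≤ K a i j) ∧ (∀ i, ∑ j, K a i j = 1))
    (rb : A → Fin m → ℝ)
    (v : Fin n → ℝ)
    (hv : ∀ i, v i = univ.sup' univ_nonempty
      (fun a => r a i + γ * ∑ j, P a i j * v j))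
    (Qb : Fin m → A → ℝ)
    (hQb : ∀ x a, Qb x a = rb a x + γ * ∑ y, (K a * D) x y *
      (univ.sup' univ_nonempty (fun b => Qb y b))) :
    ‖v - (fun i => univ.sup' univ_nonempty (fun a => ∑ j, D i j * Qb j a))‖ ≤
      (1 / (1 - γ)) *
        (univ.sup' univ_nonempty (fun a => ‖r a - D.mulVec (rb a)‖)) +
      ((univ.sup' univ_nonempty (fun p : A × Fin m => rb p.1 p.2) -
        univ.inf' univ_nonempty (fun p : A × Fin m => rb p.1 p.2)) / (1 - γ) ^ 2) *
        ((γ / 2) *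
          (univ.sup' univ_nonempty (fun a =>
            univ.sup' univ_nonempty (fun i => ∑ j, |(P a - D * K a) i j|))) +
         univ.sup' univ_nonempty (fun i =>
           1 - univ.sup' univ_nonempty (fun j => D i j))) := by
  obtain ⟨lo, hQ⟩ := exists_forall_mem_Icc_of_eq_reward_add_mulVec_rowMax hγ0 hγ1
    (fun a => IsRowStochastic.mul (hK a) hD) hQb
  set εr := univ.sup' univ_nonempty fun a => ‖r a - D *ᵥ rb a‖
  set εP := univ.sup' univ_nonempty fun a =>
    univ.sup' univ_nonempty fun i => ∑ j, |(P a - D * K a) i j|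
  have hres := norm_bellman_rowMax_mul_sub_le (εr := εr) (εP := εP) hγ0 hγ1.le hP r hD hK hQb hQ
    (fun a => le_sup' (fun a => ‖r a - D *ᵥ rb a‖) (mem_univ a))
    (fun a i => le_sup'_of_le _ (mem_univ a)
      (le_sup' (fun i => ∑ j, |(P a - D * K a) i j|) (mem_univ i)))
  refine (norm_sub_le_of_isFixedPt_bellman hγ0 hγ1 hP (funext fun i => (hv i).symm) _).trans ?_
  refine (div_le_div_of_nonneg_right hres (sub_pos.2 hγ1).le).trans_eq ?_
  have hγ' : 1 - γ ≠ 0 := (sub_pos.2 hγ1).ne'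
  unfold spread nondeterminism
  field_simp
end

section
/- Let E ∈ ℝ^{n×n} be a stochastic matrix and T a γ-contraction on (ℝ^n, ‖·‖_∞) with fixed point v̌*, where 0 ≤ γ < 1. Suppose T̄ = E∘T (i.e., T̄v = E·(Tv)) has fixed point v̄̄*, and u ∈ ℝ^n satisfies E·u = u. Then ‖u − v̄̄*‖_∞ ≤ (1+γ)/(1−γ) · ‖u − v̌*‖_∞. -/
lemma avg_norm_le {n : ℕ} (E : Matrix (Fin n) (Fin n) ℝ)
    (h0 : ∀ i j, 0 ≤ E i j) (h1 : ∀ i, ∑ j, E i j = 1)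
    (x : Fin n → ℝ) : ‖E.mulVec x‖ ≤ ‖x‖ := by
  rw [pi_norm_le_iff_of_nonneg (norm_nonneg x)]
  intro i
  have : |∑ j, E i j * x j| ≤ ∑ j, E i j * |x j| := by
    refine (Finset.abs_sum_le_sum_abs _ _).trans ?_
    refine Finset.sum_le_sum fun j _ => ?_
    rw [abs_mul, abs_of_nonneg (h0 i j)]
  refine this.trans ?_
  calc ∑ j, E i j * |x j| ≤ ∑ j, E i j * ‖x‖ := by
        refine Finset.sum_le_sum fun j _ => ?_
        exact mul_le_mul_of_nonneg_left (norm_le_pi_norm x j) (h0 i j)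
    _ = ‖x‖ := by rw [← Finset.sum_mul, h1 i, one_mul]

/-- Let `E ∈ ℝ^{n×n}` be a stochastic matrix and `T` a `γ`-contraction on
`(ℝ^n, ‖·‖_∞)` (sup norm on `Fin n → ℝ`) with fixed point `v̌*`, `0 ≤ γ < 1`.
If `v̄̄*` is a fixed point of `T̄ = E ∘ T` (i.e. `E·(T v̄̄*) = v̄̄*`) and `u`
satisfies `E·u = u`, then `‖u − v̄̄*‖_∞ ≤ ((1+γ)/(1−γ)) ‖u − v̌*‖_∞`. -/
theorem averager_fixed_point_bound {n : ℕ}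
    (E : Matrix (Fin n) (Fin n) ℝ)
    (hE : (∀ i j, 0 ≤ E i j) ∧ (∀ i, ∑ j, E i j = 1))
    (T : (Fin n → ℝ) → (Fin n → ℝ)) (γ : ℝ) (hγ0 : 0 ≤ γ) (hγ1 : γ < 1)
    (hT : ∀ x y : Fin n → ℝ, ‖T x - T y‖ ≤ γ * ‖x - y‖)
    (vcheck : Fin n → ℝ) (hvcheck : T vcheck = vcheck)
    (vbar : Fin n → ℝ) (hvbar : E.mulVec (T vbar) = vbar)
    (u : Fin n → ℝ) (hu : E.mulVec u = u) :
    ‖u - vbar‖ ≤ ((1 + γ) / (1 - γ)) * ‖u - vcheck‖ := by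
  obtain ⟨h0, h1⟩ := hE
  have key : ‖u - vbar‖ ≤ ‖u - T vbar‖ := by
    have : u - vbar = E.mulVec (u - T vbar) := by
      rw [Matrix.mulVec_sub, hu, hvbar]
    rw [this]; exact avg_norm_le E h0 h1 _
  have h2 : ‖u - T vbar‖ ≤ ‖u - T u‖ + γ * ‖u - vbar‖ := by
    calc ‖u - T vbar‖ = ‖(u - T u) + (T u - T vbar)‖ := by ring_nf
      _ ≤ ‖u - T u‖ + ‖T u - T vbar‖ := norm_add_le _ _
      _ ≤ ‖u - T u‖ + γ * ‖u - vbar‖ := by linarith [hT u vbar]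
  have h3 : ‖u - T u‖ ≤ (1 + γ) * ‖u - vcheck‖ := by
    calc ‖u - T u‖ = ‖(u - vcheck) + (T vcheck - T u)‖ := by rw [hvcheck]; ring_nf
      _ ≤ ‖u - vcheck‖ + ‖T vcheck - T u‖ := norm_add_le _ _
      _ ≤ ‖u - vcheck‖ + γ * ‖vcheck - u‖ := by linarith [hT vcheck u]
      _ = (1 + γ) * ‖u - vcheck‖ := by rw [norm_sub_rev vcheck u]; ring
  have hpos : 0 < 1 - γ := by linarith
  rw [div_mul_eq_mul_div, le_div_iff₀ hpos]
  nlinarith [norm_nonneg (u - vcheck)]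
end
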